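/- Let (𝒳, 𝒴) be an admissible balanced pair in an abelian category 𝒜 and (𝒞, 𝒟) a hereditary relative cotorsion pair. If every object of 𝒜 has a minimal right 𝒞-approximation and every object of 𝒞 has a minimal left 𝒟-approximation, then every object of 𝒜 has a minimal left 𝒟-approximation; hence (𝒞, 𝒟) is perfect. -/

import Mathlib

open CategoryTheory Limits

universe v u

variable {A : Type u} [Category.{v} A] [Abelian A]

/-- `Hom(X, -)` for `X ∈ 𝒳` carries the short complex `S` to a short exact
sequence of abelian groups. -/
def SESRightAcyclic (𝒳 : Set A) (S : ShortComplex A) : Prop :=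
  ∀ X ∈ 𝒳,
    (Function.Injective fun h : X ⟶ S.X₁ => h ≫ S.f) ∧
    (∀ h : X ⟶ S.X₂, h ≫ S.g = 0 → ∃ k : X ⟶ S.X₁, k ≫ S.f = h) ∧
    (Function.Surjective fun h : X ⟶ S.X₂ => h ≫ S.g)

/-- `Hom(-, Y)` for `Y ∈ 𝒴` carries the short complex `S` to a short exact
sequence of abelian groups. -/
def SESLeftAcyclic (𝒴 : Set A) (S : ShortComplex A) : Prop :=
  ∀ Y ∈ 𝒴,
    (Function.Injective fun h : S.X₃ ⟶ Y => S.g ≫ h) ∧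
    (∀ h : S.X₂ ⟶ Y, S.f ≫ h = 0 → ∃ k : S.X₃ ⟶ Y, S.g ≫ k = h) ∧
    (Function.Surjective fun h : S.X₂ ⟶ Y => S.f ≫ h)

/-- A `⁎`-acyclic short exact sequence: short exact, right `𝒳`-acyclic and
left `𝒴`-acyclic. -/
def SESStarAcyclic (𝒳 𝒴 : Set A) (S : ShortComplex A) : Prop :=
  S.ShortExact ∧ SESRightAcyclic 𝒳 S ∧ SESLeftAcyclic 𝒴 S

/-- A cochain complex `C` is right `𝒳`-acyclic if `Hom(X, C)` is acyclic for every `X ∈ 𝒳`. -/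
def RightAcyclicComplex (𝒳 : Set A) (C : CochainComplex A ℤ) : Prop :=
  ∀ X ∈ 𝒳, ∀ n : ℤ, ∀ h : X ⟶ C.X n, h ≫ C.d n (n + 1) = 0 →
    ∃ k : X ⟶ C.X (n - 1), k ≫ C.d (n - 1) n = h

/-- A cochain complex `C` is left `𝒴`-acyclic if `Hom(C, Y)` is acyclic for every `Y ∈ 𝒴`. -/
def LeftAcyclicComplex (𝒴 : Set A) (C : CochainComplex A ℤ) : Prop :=
  ∀ Y ∈ 𝒴, ∀ n : ℤ, ∀ h : C.X n ⟶ Y, C.d (n - 1) n ≫ h = 0 →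
    ∃ k : C.X (n + 1) ⟶ Y, C.d n (n + 1) ≫ k = h

/-- `f` is a right `𝒳`-quasi-isomorphism iff its mapping cone is right `𝒳`-acyclic. -/
noncomputable def RightQuasiIso (𝒳 : Set A) {C D : CochainComplex A ℤ} (f : C ⟶ D) : Prop :=
  RightAcyclicComplex 𝒳 (CochainComplex.mappingCone f)

/-- `f` is a `⁎`-quasi-isomorphism: its mapping cone is right `𝒳`-acyclic and left `𝒴`-acyclic. -/
noncomputable def StarQuasiIso (𝒳 𝒴 : Set A) {C D : CochainComplex A ℤ} (f : C ⟶ D) : Prop :=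
  RightAcyclicComplex 𝒳 (CochainComplex.mappingCone f) ∧
    LeftAcyclicComplex 𝒴 (CochainComplex.mappingCone f)

/-- A bounded-above complex with all components in `𝒳`. -/
def MinusComplexIn (𝒳 : Set A) (C : CochainComplex A ℤ) : Prop :=
  (∃ b : ℤ, ∀ i : ℤ, b < i → IsZero (C.X i)) ∧ ∀ i : ℤ, C.X i ∈ 𝒳

/-- A bounded complex. -/
def BoundedComplex (C : CochainComplex A ℤ) : Prop :=
  ∃ a b : ℤ, ∀ i : ℤ, i < a ∨ b < i → IsZero (C.X i)

/-- A proper `𝒳`-resolution `⋯ → P⁻¹ → P⁰ —ε→ M → 0`: the components of `P` in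
nonpositive degrees lie in `𝒳`, the positive components vanish, and the augmented
complex is right `𝒳`-acyclic. -/
def IsProperXResolution (𝒳 : Set A) (M : A) (P : CochainComplex A ℤ) (ε : P.X 0 ⟶ M) : Prop :=
  (∀ i : ℤ, 0 < i → IsZero (P.X i)) ∧ (∀ i : ℤ, i ≤ 0 → P.X i ∈ 𝒳) ∧
  P.d (-1) 0 ≫ ε = 0 ∧
  ∀ X ∈ 𝒳,
    (∀ h : X ⟶ M, ∃ k : X ⟶ P.X 0, k ≫ ε = h) ∧
    (∀ h : X ⟶ P.X 0, h ≫ ε = 0 → ∃ k : X ⟶ P.X (-1), k ≫ P.d (-1) 0 = h) ∧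
    (∀ n : ℤ, n < 0 → ∀ h : X ⟶ P.X n, h ≫ P.d n (n + 1) = 0 →
      ∃ k : X ⟶ P.X (n - 1), k ≫ P.d (n - 1) n = h)

/-- The augmented complex `⋯ → P⁻¹ → P⁰ —ε→ M → 0` is left `𝒴`-acyclic. -/
def AugResLeftAcyclic (𝒴 : Set A) (M : A) (P : CochainComplex A ℤ) (ε : P.X 0 ⟶ M) : Prop :=
  ∀ Y ∈ 𝒴,
    (∀ h : M ⟶ Y, ε ≫ h = 0 → h = 0) ∧
    (∀ h : P.X 0 ⟶ Y, P.d (-1) 0 ≫ h = 0 → ∃ k : M ⟶ Y, ε ≫ k = h) ∧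
    (∀ n : ℤ, n < 0 → ∀ h : P.X n ⟶ Y, P.d (n - 1) n ≫ h = 0 →
      ∃ k : P.X (n + 1) ⟶ Y, P.d n (n + 1) ≫ k = h)

/-- A proper `𝒴`-coresolution `0 → N —η→ Q⁰ → Q¹ → ⋯`. -/
def IsProperYCoresolution (𝒴 : Set A) (N : A) (Q : CochainComplex A ℤ) (η : N ⟶ Q.X 0) : Prop :=
  (∀ i : ℤ, i < 0 → IsZero (Q.X i)) ∧ (∀ i : ℤ, 0 ≤ i → Q.X i ∈ 𝒴) ∧
  η ≫ Q.d 0 1 = 0 ∧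
  ∀ Y ∈ 𝒴,
    (∀ h : N ⟶ Y, ∃ k : Q.X 0 ⟶ Y, η ≫ k = h) ∧
    (∀ h : Q.X 0 ⟶ Y, η ≫ h = 0 → ∃ k : Q.X 1 ⟶ Y, Q.d 0 1 ≫ k = h) ∧
    (∀ n : ℤ, 0 < n → ∀ h : Q.X n ⟶ Y, Q.d (n - 1) n ≫ h = 0 →
      ∃ k : Q.X (n + 1) ⟶ Y, Q.d n (n + 1) ≫ k = h)

/-- The augmented complex `0 → N —η→ Q⁰ → Q¹ → ⋯` is right `𝒳`-acyclic. -/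
def AugCoresRightAcyclic (𝒳 : Set A) (N : A) (Q : CochainComplex A ℤ) (η : N ⟶ Q.X 0) : Prop :=
  ∀ X ∈ 𝒳,
    (∀ h : X ⟶ N, h ≫ η = 0 → h = 0) ∧
    (∀ h : X ⟶ Q.X 0, h ≫ Q.d 0 1 = 0 → ∃ k : X ⟶ N, k ≫ η = h) ∧
    (∀ n : ℤ, 0 < n → ∀ h : X ⟶ Q.X n, h ≫ Q.d n (n + 1) = 0 →
      ∃ k : X ⟶ Q.X (n - 1), k ≫ Q.d (n - 1) n = h)

/-- `f : X ⟶ M` is a right `𝒳`-approximation of `M`. -/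
def IsRightApprox (𝒳 : Set A) {X M : A} (f : X ⟶ M) : Prop :=
  X ∈ 𝒳 ∧ ∀ X' ∈ 𝒳, ∀ g : X' ⟶ M, ∃ h : X' ⟶ X, h ≫ f = g

/-- `f : M ⟶ Y` is a left `𝒴`-approximation of `M`. -/
def IsLeftApprox (𝒴 : Set A) {M Y : A} (f : M ⟶ Y) : Prop :=
  Y ∈ 𝒴 ∧ ∀ Y' ∈ 𝒴, ∀ g : M ⟶ Y', ∃ h : Y ⟶ Y', f ≫ h = g

/-- A minimal (right minimal) right `𝒳`-approximation. -/
def IsMinimalRightApprox (𝒳 : Set A) {X M : A} (f : X ⟶ M) : Prop :=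
  IsRightApprox 𝒳 f ∧ ∀ s : X ⟶ X, s ≫ f = f → IsIso s

/-- A minimal (left minimal) left `𝒴`-approximation. -/
def IsMinimalLeftApprox (𝒴 : Set A) {M Y : A} (f : M ⟶ Y) : Prop :=
  IsLeftApprox 𝒴 f ∧ ∀ s : Y ⟶ Y, f ≫ s = f → IsIso s

/-- `(𝒳, 𝒴)` is a balanced pair: `𝒳` is contravariantly finite, `𝒴` is covariantly
finite, every object has a left `𝒴`-acyclic proper `𝒳`-resolution and a right
`𝒳`-acyclic proper `𝒴`-coresolution. -/
def IsBalancedPair (𝒳 𝒴 : Set A) : Prop :=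
  (∀ M : A, ∃ (X : A) (f : X ⟶ M), IsRightApprox 𝒳 f) ∧
  (∀ M : A, ∃ (Y : A) (f : M ⟶ Y), IsLeftApprox 𝒴 f) ∧
  (∀ M : A, ∃ (P : CochainComplex A ℤ) (ε : P.X 0 ⟶ M),
    IsProperXResolution 𝒳 M P ε ∧ AugResLeftAcyclic 𝒴 M P ε) ∧
  (∀ N : A, ∃ (Q : CochainComplex A ℤ) (η : N ⟶ Q.X 0),
    IsProperYCoresolution 𝒴 N Q η ∧ AugCoresRightAcyclic 𝒳 N Q η)

/-- Vanishing of the relative Ext group `Ext⁎ⁱ(M, N)`: the `i`-th cohomology of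
`Hom(P, N)` vanishes for every proper `𝒳`-resolution `P` of `M`. -/
def ExtStarVanish (𝒳 : Set A) (i : ℕ) (M N : A) : Prop :=
  ∀ (P : CochainComplex A ℤ) (ε : P.X 0 ⟶ M), IsProperXResolution 𝒳 M P ε →
    ∀ h : P.X (-(i : ℤ)) ⟶ N, P.d (-(i : ℤ) - 1) (-(i : ℤ)) ≫ h = 0 →
      ∃ k : P.X (-(i : ℤ) + 1) ⟶ N, P.d (-(i : ℤ)) (-(i : ℤ) + 1) ≫ k = h

/-- A cotorsion pair relative to the balanced pair `(𝒳, 𝒴)`, defined by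
orthogonality with respect to `Ext⁎¹`. -/
def IsRelCotorsionPair (𝒳 𝒞 𝒟 : Set A) : Prop :=
  (∀ C : A, C ∈ 𝒞 ↔ ∀ D ∈ 𝒟, ExtStarVanish 𝒳 1 C D) ∧
  (∀ D : A, D ∈ 𝒟 ↔ ∀ C ∈ 𝒞, ExtStarVanish 𝒳 1 C D)

/-- `𝒳` is admissible: every right `𝒳`-approximation is an epimorphism. -/
def XAdmissible (𝒳 : Set A) : Prop :=
  ∀ (X M : A) (f : X ⟶ M), IsRightApprox 𝒳 f → Epi f

/-- `𝒴` is coadmissible: every left `𝒴`-approximation is a monomorphism. -/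
def YCoadmissible (𝒴 : Set A) : Prop :=
  ∀ (M Y : A) (f : M ⟶ Y), IsLeftApprox 𝒴 f → Mono f

/-- `𝒳`-resolution dimension of `M` is at most `n`. -/
def XResdimLE (𝒳 : Set A) (n : ℕ) (M : A) : Prop :=
  ∃ (P : CochainComplex A ℤ) (ε : P.X 0 ⟶ M),
    IsProperXResolution 𝒳 M P ε ∧ ∀ i : ℤ, i < -(n : ℤ) → IsZero (P.X i)

/-- `𝒴`-coresolution dimension of `N` is at most `n`. -/
def YCoresdimLE (𝒴 : Set A) (n : ℕ) (N : A) : Prop :=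
  ∃ (Q : CochainComplex A ℤ) (η : N ⟶ Q.X 0),
    IsProperYCoresolution 𝒴 N Q η ∧ ∀ i : ℤ, (n : ℤ) < i → IsZero (Q.X i)

/-
Take a minimal right `𝒞`-approximation `φ : C ⟶ M` and a minimal left `𝒟`-approximation
`ψ : C ⟶ E`. By Wakamatsu's lemma `K = ker φ` lies in `𝒟`, and by its dual `L = coker ψ` lies
in `𝒞`. The pushout `μ : M ⟶ D'` of `ψ` along `φ` is a left `𝒟`-approximation: `D'` sits in a
proper sequence `0 → K → E → D' → 0`, so `Ext⁎¹(-, D')` vanishes on `𝒞` because `Ext⁎¹(-, E)` and,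
by heredity, `Ext⁎²(-, K)` do. It is left minimal because an endomorphism of `D'` fixing `M` is
induced by an endomorphism of `E` fixing `C`, which is invertible by minimality of `ψ`.

Throughout, `Ext⁎¹(T, N) = 0` is used in the form "every proper short exact sequence
`0 → N → W → T → 0` splits", which a dimension shift along a proper `𝒳`-resolution of `T` shows
to be equivalent to the cocycle definition.
-/

namespace CategoryTheory.ShortComplex.ShortExact

variable {S : ShortComplex A}

lemma exists_lift (hS : S.ShortExact) {T : A} (k : T ⟶ S.X₂) (hk : k ≫ S.g = 0) :
    ∃ l : T ⟶ S.X₁, l ≫ S.f = k :=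
  have := hS.mono_f
  ⟨_, hS.exact.lift_f k hk⟩

lemma exists_desc (hS : S.ShortExact) {Z : A} (k : S.X₂ ⟶ Z) (hk : S.f ≫ k = 0) :
    ∃ l : S.X₃ ⟶ Z, S.g ≫ l = k :=
  have := hS.epi_g
  ⟨_, hS.exact.g_desc k hk⟩

lemma exists_retraction_of_section (hS : S.ShortExact) {σ : S.X₃ ⟶ S.X₂}
    (hσ : σ ≫ S.g = 𝟙 _) : ∃ r : S.X₂ ⟶ S.X₁, S.f ≫ r = 𝟙 _ :=
  ⟨_, (Splitting.ofExactOfSection S hS.exact σ hσ hS.mono_f).f_r⟩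

lemma exists_section_of_retraction (hS : S.ShortExact) {r : S.X₂ ⟶ S.X₁}
    (hr : S.f ≫ r = 𝟙 _) : ∃ σ : S.X₃ ⟶ S.X₂, σ ≫ S.g = 𝟙 _ :=
  ⟨_, (Splitting.ofExactOfRetraction S hS.exact r hr hS.epi_g).s_g⟩

lemma pushout (hS : S.ShortExact) {N : A} (a : S.X₁ ⟶ N) :
    (ShortComplex.mk (pushout.inr S.f a) (pushout.desc S.g 0 (by rw [S.zero, comp_zero]))
      (pushout.inr_desc _ _ _)).ShortExact := by
  have := hS.mono_f
  have := hS.epi_g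
  refine { exact := ?_, mono_f := inferInstanceAs (Mono (pushout.inr S.f a)),
           epi_g := epi_of_epi_fac (pushout.inl_desc _ _ _) }
  rw [exact_iff_exact_up_to_refinements]
  intro T y hy
  obtain ⟨T', π, _, x₂, x₃, hπ⟩ :=
    (IsPushout.of_hasPushout S.f a).hom_eq_add_up_to_refinements y
  have hx₂ : x₂ ≫ S.g = 0 := by
    have := hπ =≫ pushout.desc S.g 0 (by rw [S.zero, comp_zero])
    rwa [Category.assoc, hy, comp_zero, Preadditive.add_comp, Category.assoc, Category.assoc,
      pushout.inl_desc, pushout.inr_desc, comp_zero, add_zero, eq_comm] at this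
  obtain ⟨x₁, rfl⟩ := hS.exists_lift x₂ hx₂
  refine ⟨T', π, inferInstance, x₁ ≫ a + x₃, ?_⟩
  rw [hπ, Category.assoc, pushout.condition, Preadditive.add_comp, Category.assoc]

lemma pullback (hS : S.ShortExact) {T : A} (x : T ⟶ S.X₃) :
    (ShortComplex.mk (pullback.lift S.f 0 (by rw [S.zero, zero_comp])) (pullback.snd S.g x)
      (pullback.lift_snd _ _ _)).ShortExact := by
  have := hS.mono_f
  have := hS.epi_g
  refine { exact := ?_, mono_f := mono_of_mono_fac (pullback.lift_fst _ _ _),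
           epi_g := inferInstanceAs (Epi (pullback.snd S.g x)) }
  rw [exact_iff_exact_up_to_refinements]
  intro T' t ht
  have ht : t ≫ pullback.snd S.g x = 0 := ht
  obtain ⟨l, hl⟩ := hS.exists_lift (t ≫ pullback.fst _ _)
    (by rw [Category.assoc, pullback.condition, reassoc_of% ht, zero_comp])
  refine ⟨T', 𝟙 _, inferInstance, l, pullback.hom_ext ?_ ?_⟩
  · rw [Category.id_comp, Category.assoc, pullback.lift_fst, hl]
  · rw [Category.id_comp, Category.assoc, pullback.lift_snd, comp_zero, ht]

lemma pushout_inl (hS : S.ShortExact) {E : A} (ψ : S.X₂ ⟶ E) [Mono ψ] :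
    (ShortComplex.mk (S.f ≫ ψ) (pushout.inl ψ S.g)
      (by rw [Category.assoc, pushout.condition, S.zero_assoc, zero_comp])).ShortExact := by
  have := hS.epi_g
  have := hS.mono_f
  refine { exact := ?_, mono_f := mono_comp _ _, epi_g := inferInstance }
  rw [ShortComplex.exact_iff_exact_up_to_refinements]
  intro T y hy
  dsimp only at y hy ⊢
  obtain ⟨T', π, _, c, hc⟩ :=
    (IsPushout.of_hasPushout ψ S.g).exact_shortComplex.exact_up_to_refinements
      (y ≫ biprod.inl) (by
        change (y ≫ biprod.inl) ≫ biprod.desc (pushout.inl ψ S.g) (pushout.inr ψ S.g) = 0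
        rw [Category.assoc, biprod.inl_desc, hy])
  change T' ⟶ S.X₂ at c
  change π ≫ y ≫ biprod.inl = c ≫ biprod.lift ψ (-S.g) at hc
  have hc₁ : π ≫ y = c ≫ ψ := by
    simpa only [Category.assoc, biprod.inl_fst, biprod.lift_fst, Category.comp_id]
      using hc =≫ biprod.fst
  have hc₂ : c ≫ S.g = 0 := by
    simpa only [Category.assoc, biprod.inl_snd, biprod.lift_snd, comp_zero, Preadditive.comp_neg,
      zero_eq_neg] using hc =≫ biprod.snd
  obtain ⟨k, hk⟩ := hS.exists_lift c hc₂
  exact ⟨T', π, inferInstance, k, by rw [hc₁, ← hk, Category.assoc]⟩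

lemma exists_lift_of_pullback (hS : S.ShortExact) {T : A} (x : T ⟶ S.X₃)
    (hr : ∃ r, pullback.lift (f := S.g) (g := x) S.f 0 (by rw [S.zero, zero_comp]) ≫ r = 𝟙 _) :
    ∃ w : T ⟶ S.X₂, w ≫ S.g = x := by
  obtain ⟨r, hr⟩ := hr
  obtain ⟨σ, hσ⟩ := (hS.pullback x).exists_section_of_retraction hr
  refine ⟨σ ≫ pullback.fst _ _, ?_⟩
  rw [Category.assoc, pullback.condition, ← Category.assoc]
  exact (congrArg (· ≫ x) hσ).trans (Category.id_comp x)

lemma isIso_of_comm (hS : S.ShortExact) (g : S.X₂ ⟶ S.X₂) [IsIso g] (hfg : S.f ≫ g = S.f)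
    (s : S.X₃ ⟶ S.X₃) (hs : S.g ≫ s = g ≫ S.g) : IsIso s := by
  have := hS.epi_g
  have hfg' : S.f ≫ inv g = S.f := by
    rw [← cancel_mono g, Category.assoc, IsIso.inv_hom_id, hfg, Category.comp_id]
  obtain ⟨s', hs'⟩ := hS.exists_desc (inv g ≫ S.g) (by simp [reassoc_of% hfg'])
  refine ⟨s', ?_, ?_⟩
  · rw [← cancel_epi S.g, reassoc_of% hs, hs', IsIso.hom_inv_id_assoc, Category.comp_id]
  · rw [← cancel_epi S.g, reassoc_of% hs', hs, IsIso.inv_hom_id_assoc, Category.comp_id]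

end CategoryTheory.ShortComplex.ShortExact

section

variable {𝒳 𝒴 𝒞 𝒟 : Set A}

/-- `Hom(X, -)`-exactness for `X ∈ 𝒳`: given short exactness, only surjectivity at the end
needs to be asked for. -/
structure IsProperSES (𝒳 : Set A) (S : ShortComplex A) : Prop where
  shortExact : S.ShortExact
  lift : ∀ X ∈ 𝒳, ∀ x : X ⟶ S.X₃, ∃ w : X ⟶ S.X₂, w ≫ S.g = x

/-- `Ext⁎¹(T, N) = 0` in Yoneda form, see `extStarVanish_one_iff_properExtensionsSplit`. -/
def ProperExtensionsSplit (𝒳 : Set A) (T N : A) : Prop :=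
  ∀ ⦃W : A⦄ (f : N ⟶ W) (g : W ⟶ T) (w : f ≫ g = 0),
    IsProperSES 𝒳 (ShortComplex.mk f g w) → ∃ r : W ⟶ N, f ≫ r = 𝟙 N

namespace IsProperSES

variable {S : ShortComplex A}

lemma pushout (hS : IsProperSES 𝒳 S) {N : A} (a : S.X₁ ⟶ N) :
    IsProperSES 𝒳 (ShortComplex.mk (pushout.inr S.f a)
      (pushout.desc S.g 0 (by rw [S.zero, comp_zero])) (pushout.inr_desc _ _ _)) where
  shortExact := hS.shortExact.pushout a
  lift X hX x := by
    obtain ⟨w, hw⟩ := hS.lift X hX x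
    exact ⟨w ≫ pushout.inl _ _, by
      rw [Category.assoc, ← hw]; exact congrArg _ (pushout.inl_desc _ _ _)⟩

lemma pullback (hS : IsProperSES 𝒳 S) {T : A} (x : T ⟶ S.X₃) :
    IsProperSES 𝒳 (ShortComplex.mk (pullback.lift S.f 0 (by rw [S.zero, zero_comp]))
      (pullback.snd S.g x) (pullback.lift_snd _ _ _)) where
  shortExact := hS.shortExact.pullback x
  lift X hX z := by
    obtain ⟨w, hw⟩ := hS.lift X hX (z ≫ x)
    exact ⟨pullback.lift w z hw, pullback.lift_snd _ _ _⟩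

lemma exists_extension_of_properExtensionsSplit (hS : IsProperSES 𝒳 S) {N : A}
    (hN : ProperExtensionsSplit 𝒳 S.X₃ N) (a : S.X₁ ⟶ N) : ∃ b : S.X₂ ⟶ N, S.f ≫ b = a := by
  obtain ⟨r, hr⟩ := hN _ _ _ (hS.pushout a)
  exact ⟨pushout.inl _ _ ≫ r, by rw [pushout.condition_assoc, hr, Category.comp_id]⟩

lemma exists_lift_of_properExtensionsSplit (hS : IsProperSES 𝒳 S) {T : A}
    (hT : ProperExtensionsSplit 𝒳 T S.X₁) (x : T ⟶ S.X₃) : ∃ w : T ⟶ S.X₂, w ≫ S.g = x :=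
  hS.shortExact.exists_lift_of_pullback x (hT _ _ _ (hS.pullback x))

end IsProperSES

lemma properExtensionsSplit_of_mem {X : A} (hX : X ∈ 𝒳) (N : A) :
    ProperExtensionsSplit 𝒳 X N := fun _ _ _ _ hS =>
  let ⟨_, hσ⟩ := hS.lift X hX (𝟙 X)
  hS.shortExact.exists_retraction_of_section hσ

def HasEpiCovers (𝒳 : Set A) : Prop :=
  ∀ T : A, ∃ (X : A) (e : X ⟶ T), X ∈ 𝒳 ∧ Epi e

lemma IsBalancedPair.hasEpiCovers (hbp : IsBalancedPair 𝒳 𝒴) (hadm : XAdmissible 𝒳) :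
    HasEpiCovers 𝒳 := fun T =>
  let ⟨X, e, he⟩ := hbp.1 T
  ⟨X, e, he.1, hadm _ _ _ he⟩

namespace HasEpiCovers

lemma exact (hcov : HasEpiCovers 𝒳) {S : ShortComplex A}
    (h : ∀ X ∈ 𝒳, ∀ x : X ⟶ S.X₂, x ≫ S.g = 0 → ∃ k : X ⟶ S.X₁, k ≫ S.f = x) : S.Exact := by
  rw [ShortComplex.exact_iff_exact_up_to_refinements]
  intro T x hx
  obtain ⟨X, e, hX, he⟩ := hcov T
  obtain ⟨k, hk⟩ := h X hX (e ≫ x) (by rw [Category.assoc, hx, comp_zero])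
  exact ⟨X, e, he, k, hk.symm⟩

lemma mono (hcov : HasEpiCovers 𝒳) {N Q : A} (f : N ⟶ Q)
    (h : ∀ X ∈ 𝒳, ∀ x : X ⟶ N, x ≫ f = 0 → x = 0) : Mono f := by
  refine Preadditive.mono_of_cancel_zero f fun {T} t ht => ?_
  obtain ⟨X, e, hX, he⟩ := hcov T
  exact zero_of_epi_comp e (h X hX (e ≫ t) (by rw [Category.assoc, ht, comp_zero]))

end HasEpiCovers

set_option linter.unusedSectionVars false in
lemma IsRightApprox.epi (hcov : HasEpiCovers 𝒳) (h : 𝒳 ⊆ 𝒞) {C M : A} {φ : C ⟶ M}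
    (hφ : IsRightApprox 𝒞 φ) : Epi φ := by
  obtain ⟨X, e, hX, he⟩ := hcov M
  obtain ⟨k, hk⟩ := hφ.2 X (h hX) e
  exact epi_of_epi_fac hk

noncomputable abbrev syzygySeq (P : CochainComplex A ℤ) {T : A} (ε : P.X 0 ⟶ T)
    (hε : P.d (-1) 0 ≫ ε = 0) : ShortComplex A :=
  ShortComplex.mk (cokernel.desc (P.d (-2) (-1)) (P.d (-1) 0) (P.d_comp_d _ _ _)) ε
    (by rw [← cancel_epi (cokernel.π _), cokernel.π_desc_assoc, hε, comp_zero])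

lemma IsProperXResolution.isProperSES_syzygySeq (hcov : HasEpiCovers 𝒳) {T : A}
    {P : CochainComplex A ℤ} {ε : P.X 0 ⟶ T} (hP : IsProperXResolution 𝒳 T P ε) :
    IsProperSES 𝒳 (syzygySeq P ε hP.2.2.1) := by
  obtain ⟨-, hmem, -, hacyc⟩ := hP
  have hd : (ShortComplex.mk (P.d (-2) (-1)) (P.d (-1) 0) (P.d_comp_d _ _ _)).Exact :=
    hcov.exact fun X hX x hx => (hacyc X hX).2.2 (-1) (by norm_num) x hx
  have := hd.mono_cokernelDesc
  have := IsRightApprox.epi hcov subset_rfl ⟨hmem 0 le_rfl, fun X hX => (hacyc X hX).1⟩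
  refine ⟨{ exact := hcov.exact fun X hX x hx => ?_ }, fun X hX => (hacyc X hX).1⟩
  obtain ⟨k, hk⟩ := (hacyc X hX).2.1 x hx
  exact ⟨k ≫ cokernel.π _, by rw [Category.assoc, cokernel.π_desc, hk]⟩

lemma syzygySeq_extension_iff (P : CochainComplex A ℤ) {T N : A} (ε : P.X 0 ⟶ T)
    (hε : P.d (-1) 0 ≫ ε = 0) :
    (∀ u : (syzygySeq P ε hε).X₁ ⟶ N, ∃ k : P.X 0 ⟶ N, (syzygySeq P ε hε).f ≫ k = u) ↔
      ∀ h : P.X (-1) ⟶ N, P.d (-2) (-1) ≫ h = 0 → ∃ k : P.X 0 ⟶ N, P.d (-1) 0 ≫ k = h := by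
  constructor
  · intro H h hh
    obtain ⟨k, hk⟩ := H (cokernel.desc _ h hh)
    exact ⟨k, by rw [← cokernel.π_desc _ _ (P.d_comp_d (-2) (-1) 0), Category.assoc, hk,
      cokernel.π_desc]⟩
  · intro H u
    obtain ⟨k, hk⟩ := H (cokernel.π _ ≫ u) (by rw [cokernel.condition_assoc, zero_comp])
    exact ⟨k, by rw [← cancel_epi (cokernel.π _), cokernel.π_desc_assoc, hk]⟩

lemma extStarVanish_one_iff {T N : A} :
    ExtStarVanish 𝒳 1 T N ↔ ∀ (P : CochainComplex A ℤ) (ε : P.X 0 ⟶ T),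
      IsProperXResolution 𝒳 T P ε → ∀ h : P.X (-1) ⟶ N, P.d (-2) (-1) ≫ h = 0 →
        ∃ k : P.X 0 ⟶ N, P.d (-1) 0 ≫ k = h :=
  Iff.rfl

lemma extStarVanish_two_iff {T N : A} :
    ExtStarVanish 𝒳 2 T N ↔ ∀ (P : CochainComplex A ℤ) (ε : P.X 0 ⟶ T),
      IsProperXResolution 𝒳 T P ε → ∀ h : P.X (-2) ⟶ N, P.d (-3) (-2) ≫ h = 0 →
        ∃ k : P.X (-1) ⟶ N, P.d (-2) (-1) ≫ k = h :=
  Iff.rfl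

lemma IsProperSES.exists_retraction_of_extension {S : ShortComplex A} (hS : IsProperSES 𝒳 S)
    {Ω P₀ : A} {ι : Ω ⟶ P₀} {π : P₀ ⟶ S.X₃} {w : ι ≫ π = 0}
    (hpres : (ShortComplex.mk ι π w).ShortExact) (hP₀ : P₀ ∈ 𝒳)
    (hext : ∀ u : Ω ⟶ S.X₁, ∃ k : P₀ ⟶ S.X₁, ι ≫ k = u) :
    ∃ r : S.X₂ ⟶ S.X₁, S.f ≫ r = 𝟙 _ := by
  obtain ⟨π', hπ'⟩ := hS.lift P₀ hP₀ π
  obtain ⟨u, hu⟩ := hS.shortExact.exists_lift (ι ≫ π') (by rw [Category.assoc, hπ', w])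
  obtain ⟨k, hk⟩ := hext u
  obtain ⟨σ, hσ⟩ := hpres.exists_desc (π' - k ≫ S.f)
    (by rw [Preadditive.comp_sub, reassoc_of% hk, hu, sub_self])
  have : Epi π := hpres.epi_g
  refine hS.shortExact.exists_retraction_of_section (σ := σ) ?_
  rw [← cancel_epi π, reassoc_of% hσ, Preadditive.sub_comp, Category.assoc, S.zero, comp_zero,
    sub_zero, hπ', Category.comp_id]

theorem extStarVanish_one_iff_properExtensionsSplit (hbp : IsBalancedPair 𝒳 𝒴)
    (hadm : XAdmissible 𝒳) {T N : A} : ExtStarVanish 𝒳 1 T N ↔ ProperExtensionsSplit 𝒳 T N := by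
  have hcov := hbp.hasEpiCovers hadm
  constructor
  · intro h W f g w hS
    obtain ⟨P, ε, hP, -⟩ := hbp.2.2.1 T
    refine hS.exists_retraction_of_extension (hP.isProperSES_syzygySeq hcov).shortExact
      (hP.2.1 0 le_rfl) ?_
    exact (syzygySeq_extension_iff P ε hP.2.2.1).2 (extStarVanish_one_iff.1 h P ε hP)
  · intro h
    refine extStarVanish_one_iff.2 fun P ε hP => ?_
    exact (syzygySeq_extension_iff P ε hP.2.2.1).1
      ((hP.isProperSES_syzygySeq hcov).exists_extension_of_properExtensionsSplit h)

lemma IsBalancedPair.properExtensionsSplit_of_mem (hbp : IsBalancedPair 𝒳 𝒴)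
    (hadm : XAdmissible 𝒳) {Y : A} (hY : Y ∈ 𝒴) (T : A) : ProperExtensionsSplit 𝒳 T Y := by
  intro W f g w hS
  obtain ⟨P, ε, hP, hacyc⟩ := hbp.2.2.1 T
  refine hS.exists_retraction_of_extension
    (hP.isProperSES_syzygySeq (hbp.hasEpiCovers hadm)).shortExact (hP.2.1 0 le_rfl) ?_
  exact (syzygySeq_extension_iff P ε hP.2.2.1).2 ((hacyc Y hY).2.2 (-1) (by norm_num))

lemma IsBalancedPair.exists_isProperSES_middle_mem (hbp : IsBalancedPair 𝒳 𝒴) (hadm : XAdmissible 𝒳)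
    (N : A) : ∃ (Q L : A) (η : N ⟶ Q) (ρ : Q ⟶ L) (w : η ≫ ρ = 0),
      Q ∈ 𝒴 ∧ IsProperSES 𝒳 (ShortComplex.mk η ρ w) := by
  have hcov := hbp.hasEpiCovers hadm
  obtain ⟨Q, η, ⟨-, hmem, hη, -⟩, hacyc⟩ := hbp.2.2.2 N
  have : Mono η := hcov.mono η fun X hX => (hacyc X hX).1
  have hd : (ShortComplex.mk η (Q.d 0 1) hη).Exact := hcov.exact fun X hX => (hacyc X hX).2.1
  have := hd.mono_cokernelDesc
  have hι : cokernel.desc η (Q.d 0 1) hη ≫ Q.d 1 2 = 0 := by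
    rw [← cancel_epi (cokernel.π η), cokernel.π_desc_assoc, HomologicalComplex.d_comp_d,
      comp_zero]
  refine ⟨Q.X 0, cokernel η, η, cokernel.π η, cokernel.condition η, hmem 0 le_rfl,
    ⟨{ exact := ShortComplex.exact_of_g_is_cokernel _ (cokernelIsCokernel η) },
      fun X hX x => ?_⟩⟩
  obtain ⟨k, hk⟩ := (hacyc X hX).2.2 1 one_pos (x ≫ cokernel.desc η (Q.d 0 1) hη)
    (by rw [Category.assoc]; exact (congrArg (x ≫ ·) hι).trans comp_zero)
  exact ⟨k, by rw [← cancel_mono (cokernel.desc η (Q.d 0 1) hη), Category.assoc,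
    cokernel.π_desc]; exact hk⟩

lemma IsBalancedPair.exists_retraction_of_extension (hbp : IsBalancedPair 𝒳 𝒴)
    (hadm : XAdmissible 𝒳) {S : ShortComplex A} (hS : S.ShortExact) (hX : S.X₃ ∈ 𝒳)
    (hext : ∀ Y ∈ 𝒴, ∀ a : S.X₁ ⟶ Y, ∃ b : S.X₂ ⟶ Y, S.f ≫ b = a) :
    ∃ r : S.X₂ ⟶ S.X₁, S.f ≫ r = 𝟙 _ := by
  obtain ⟨Q, L, η, ρ, w, hQ, hηρ⟩ := hbp.exists_isProperSES_middle_mem hadm S.X₁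
  obtain ⟨b, hb⟩ := hext Q hQ η
  obtain ⟨c, hc⟩ := hS.exists_desc (b ≫ ρ) (by rw [reassoc_of% hb, w])
  obtain ⟨β, hβ⟩ := hηρ.lift _ hX c
  obtain ⟨θ, hθ⟩ := hηρ.shortExact.exists_lift (b - S.g ≫ β)
    (by rw [Preadditive.sub_comp, Category.assoc, (hβ : β ≫ ρ = c), hc, sub_self])
  have : Mono η := hηρ.shortExact.mono_f
  refine ⟨θ, ?_⟩
  rw [← cancel_mono η, Category.assoc]
  refine (congrArg (S.f ≫ ·) hθ).trans ?_
  rw [Preadditive.comp_sub, hb, S.zero_assoc, zero_comp, sub_zero, Category.id_comp]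

lemma IsBalancedPair.isProperSES_of_extension (hbp : IsBalancedPair 𝒳 𝒴)
    (hadm : XAdmissible 𝒳) {S : ShortComplex A} (hS : S.ShortExact)
    (hext : ∀ Y ∈ 𝒴, ∀ a : S.X₁ ⟶ Y, ∃ b : S.X₂ ⟶ Y, S.f ≫ b = a) : IsProperSES 𝒳 S := by
  refine ⟨hS, fun X hX x => hS.exists_lift_of_pullback x ?_⟩
  refine hbp.exists_retraction_of_extension hadm (hS.pullback x) hX fun Y hY a => ?_
  obtain ⟨b, hb⟩ := hext Y hY a
  exact ⟨pullback.fst _ _ ≫ b, by rw [← Category.assoc, pullback.lift_fst]; exact hb⟩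

lemma IsLeftApprox.mono (hbp : IsBalancedPair 𝒳 𝒴) (hadm : XAdmissible 𝒳) (h : 𝒴 ⊆ 𝒟)
    {N E : A} {ψ : N ⟶ E} (hψ : IsLeftApprox 𝒟 ψ) : Mono ψ := by
  obtain ⟨Q, L, η, ρ, w, hQ, hηρ⟩ := hbp.exists_isProperSES_middle_mem hadm N
  obtain ⟨v, hv⟩ := hψ.2 Q (h hQ) η
  have : Mono η := hηρ.shortExact.mono_f
  exact mono_of_mono_fac hv

namespace IsProperSES

variable {S : ShortComplex A}

lemma extStarVanish_X₂ (hS : IsProperSES 𝒳 S) {T : A} (h₁ : ExtStarVanish 𝒳 1 T S.X₁)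
    (h₃ : ExtStarVanish 𝒳 1 T S.X₃) : ExtStarVanish 𝒳 1 T S.X₂ := by
  refine extStarVanish_one_iff.2 fun P ε hP h hh => ?_
  have := hS.shortExact.mono_f
  obtain ⟨k, hk⟩ := extStarVanish_one_iff.1 h₃ P ε hP (h ≫ S.g)
    (by rw [reassoc_of% hh, zero_comp])
  obtain ⟨k', hk'⟩ := hS.lift _ (hP.2.1 0 le_rfl) k
  obtain ⟨h', hh'⟩ := hS.shortExact.exists_lift (h - P.d (-1) 0 ≫ k')
    (by rw [Preadditive.sub_comp, Category.assoc, hk', hk, sub_self])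
  obtain ⟨k'', hk''⟩ := extStarVanish_one_iff.1 h₁ P ε hP h' (by
    rw [← cancel_mono S.f, Category.assoc, hh', Preadditive.comp_sub, hh,
      HomologicalComplex.d_comp_d_assoc, zero_comp, zero_comp, sub_self])
  exact ⟨k' + k'' ≫ S.f, by rw [Preadditive.comp_add, reassoc_of% hk'', hh', add_sub_cancel]⟩

lemma extStarVanish_X₃ (hS : IsProperSES 𝒳 S) {T : A} (h₂ : ExtStarVanish 𝒳 1 T S.X₂)
    (h₁ : ExtStarVanish 𝒳 2 T S.X₁) : ExtStarVanish 𝒳 1 T S.X₃ := by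
  refine extStarVanish_one_iff.2 fun P ε hP h hh => ?_
  have := hS.shortExact.mono_f
  obtain ⟨h', hh'⟩ := hS.lift _ (hP.2.1 (-1) (by norm_num)) h
  obtain ⟨u, hu⟩ := hS.shortExact.exists_lift (P.d (-2) (-1) ≫ h')
    (by rw [Category.assoc, hh', hh])
  obtain ⟨κ₂, hκ₂⟩ := extStarVanish_two_iff.1 h₁ P ε hP u (by
    rw [← cancel_mono S.f, Category.assoc, hu, HomologicalComplex.d_comp_d_assoc, zero_comp,
      zero_comp])
  obtain ⟨κ₁, hκ₁⟩ := extStarVanish_one_iff.1 h₂ P ε hP (h' - κ₂ ≫ S.f)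
    (by rw [Preadditive.comp_sub, reassoc_of% hκ₂, hu, sub_self])
  exact ⟨κ₁ ≫ S.g, by rw [reassoc_of% hκ₁, Preadditive.sub_comp, hh', Category.assoc, S.zero,
    comp_zero, sub_zero]⟩

lemma quotient {S₀ : ShortComplex A} (hS₀ : IsProperSES 𝒳 S₀) {D W : A} {f : D ⟶ W}
    {g : W ⟶ S₀.X₂} {w : f ≫ g = 0} (hS : IsProperSES 𝒳 (ShortComplex.mk f g w))
    (s : S₀.X₁ ⟶ W) (hs : s ≫ g = S₀.f) :
    IsProperSES 𝒳 (ShortComplex.mk (f ≫ cokernel.π s)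
      (cokernel.desc s (g ≫ S₀.g) (by rw [reassoc_of% hs, S₀.zero]))
      (by rw [Category.assoc, cokernel.π_desc, reassoc_of% w, zero_comp])) := by
  have : Mono f := hS.shortExact.mono_f
  have : Epi g := hS.shortExact.epi_g
  have : Mono S₀.f := hS₀.shortExact.mono_f
  have : Epi S₀.g := hS₀.shortExact.epi_g
  have : Mono s := mono_of_mono_fac hs
  have hq : (ShortComplex.mk s (cokernel.π s) (cokernel.condition s)).ShortExact :=
    { exact := ShortComplex.exact_of_g_is_cokernel _ (cokernelIsCokernel s) }
  have hπq := cokernel.π_desc s (g ≫ S₀.g) (by rw [reassoc_of% hs, S₀.zero])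
  refine ⟨{ exact := ?_, mono_f := ?_, epi_g := epi_of_epi_fac hπq }, fun X hX x => ?_⟩
  · rw [ShortComplex.exact_iff_exact_up_to_refinements]
    intro T t ht
    dsimp only at t ht ⊢
    obtain ⟨T', π, _, n, hn⟩ := surjective_up_to_refinements_of_epi (cokernel.π s) t
    obtain ⟨m, hm⟩ := hS₀.shortExact.exists_lift (n ≫ g) (by
      rw [Category.assoc, ← hπq, ← Category.assoc, ← hn, Category.assoc]
      exact (congrArg (π ≫ ·) ht).trans comp_zero)
    obtain ⟨u, hu⟩ := hS.shortExact.exists_lift (n - m ≫ s)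
      (by rw [Preadditive.sub_comp, Category.assoc, hs, hm, sub_self])
    refine ⟨T', π, inferInstance, u, ?_⟩
    rw [hn, ← Category.assoc, (hu : u ≫ f = n - m ≫ s), Preadditive.sub_comp, Category.assoc,
      cokernel.condition, comp_zero, sub_zero]
  · refine Preadditive.mono_of_cancel_zero _ fun {T} t ht => ?_
    dsimp only at t ht ⊢
    obtain ⟨u, hu⟩ := hq.exists_lift (t ≫ f) (by rw [Category.assoc]; exact ht)
    have hu₀ : u = 0 := by
      rw [← cancel_mono S₀.f, ← hs, ← Category.assoc, (hu : u ≫ s = t ≫ f), Category.assoc, w,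
        comp_zero, zero_comp]
    rw [← cancel_mono f, zero_comp, ← (hu : u ≫ s = t ≫ f), hu₀, zero_comp]
  · obtain ⟨b, hb⟩ := hS₀.lift X hX x
    obtain ⟨c, hc⟩ := hS.lift X hX b
    exact ⟨c ≫ cokernel.π s, by
      dsimp only at hc ⊢; rw [Category.assoc, hπq, reassoc_of% hc, hb]⟩

lemma properExtensionsSplit (hS : IsProperSES 𝒳 S) {D : A}
    (h₁ : ProperExtensionsSplit 𝒳 S.X₁ D) (h₃ : ProperExtensionsSplit 𝒳 S.X₃ D) :
    ProperExtensionsSplit 𝒳 S.X₂ D := by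
  intro W f g w hT
  obtain ⟨s, hs⟩ := hT.exists_lift_of_properExtensionsSplit h₁ S.f
  obtain ⟨r, hr⟩ := h₃ _ _ _ (hS.quotient hT s hs)
  exact ⟨cokernel.π s ≫ r, by rw [← Category.assoc]; exact hr⟩

end IsProperSES

namespace IsRelCotorsionPair

lemma mem_left_iff (hcp : IsRelCotorsionPair 𝒳 𝒞 𝒟) (hbp : IsBalancedPair 𝒳 𝒴)
    (hadm : XAdmissible 𝒳) {C : A} : C ∈ 𝒞 ↔ ∀ D ∈ 𝒟, ProperExtensionsSplit 𝒳 C D := by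
  simp only [hcp.1 C, extStarVanish_one_iff_properExtensionsSplit hbp hadm]

lemma mem_right_iff (hcp : IsRelCotorsionPair 𝒳 𝒞 𝒟) (hbp : IsBalancedPair 𝒳 𝒴)
    (hadm : XAdmissible 𝒳) {D : A} : D ∈ 𝒟 ↔ ∀ C ∈ 𝒞, ProperExtensionsSplit 𝒳 C D := by
  simp only [hcp.2 D, extStarVanish_one_iff_properExtensionsSplit hbp hadm]

lemma properExtensionsSplit (hcp : IsRelCotorsionPair 𝒳 𝒞 𝒟) (hbp : IsBalancedPair 𝒳 𝒴)
    (hadm : XAdmissible 𝒳) {C D : A} (hC : C ∈ 𝒞) (hD : D ∈ 𝒟) : ProperExtensionsSplit 𝒳 C D :=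
  (hcp.mem_left_iff hbp hadm).1 hC D hD

lemma subset_left (hcp : IsRelCotorsionPair 𝒳 𝒞 𝒟) (hbp : IsBalancedPair 𝒳 𝒴)
    (hadm : XAdmissible 𝒳) : 𝒳 ⊆ 𝒞 := fun _ hX =>
  (hcp.mem_left_iff hbp hadm).2 fun D _ => properExtensionsSplit_of_mem hX D

lemma subset_right (hcp : IsRelCotorsionPair 𝒳 𝒞 𝒟) (hbp : IsBalancedPair 𝒳 𝒴)
    (hadm : XAdmissible 𝒳) : 𝒴 ⊆ 𝒟 := fun _ hY =>
  (hcp.mem_right_iff hbp hadm).2 fun C _ => hbp.properExtensionsSplit_of_mem hadm hY C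

lemma mem_left_of_isProperSES (hcp : IsRelCotorsionPair 𝒳 𝒞 𝒟) (hbp : IsBalancedPair 𝒳 𝒴)
    (hadm : XAdmissible 𝒳) {S : ShortComplex A} (hS : IsProperSES 𝒳 S) (h₁ : S.X₁ ∈ 𝒞)
    (h₃ : S.X₃ ∈ 𝒞) : S.X₂ ∈ 𝒞 :=
  (hcp.mem_left_iff hbp hadm).2 fun _ hD => hS.properExtensionsSplit
    (hcp.properExtensionsSplit hbp hadm h₁ hD) (hcp.properExtensionsSplit hbp hadm h₃ hD)

lemma mem_right_of_isProperSES (hcp : IsRelCotorsionPair 𝒳 𝒞 𝒟) {S : ShortComplex A}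
    (hS : IsProperSES 𝒳 S) (h₁ : S.X₁ ∈ 𝒟) (h₃ : S.X₃ ∈ 𝒟) : S.X₂ ∈ 𝒟 :=
  (hcp.2 _).2 fun C hC => hS.extStarVanish_X₂ ((hcp.2 _).1 h₁ C hC) ((hcp.2 _).1 h₃ C hC)

end IsRelCotorsionPair

/-- Wakamatsu's lemma. -/
lemma IsMinimalRightApprox.kernel_mem (hcp : IsRelCotorsionPair 𝒳 𝒞 𝒟)
    (hbp : IsBalancedPair 𝒳 𝒴) (hadm : XAdmissible 𝒳) {C M : A} {φ : C ⟶ M}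
    (hφ : IsMinimalRightApprox 𝒞 φ) : kernel φ ∈ 𝒟 := by
  refine (hcp.mem_right_iff hbp hadm).2 fun C' hC' W f g w hS => ?_
  have hV := hcp.mem_left_of_isProperSES hbp hadm (hS.pushout (kernel.ι φ)) hφ.1.1 hC'
  obtain ⟨σ, hσ⟩ := hφ.1.2 _ hV (pushout.desc 0 φ (by rw [comp_zero, kernel.condition]))
  have : IsIso (pushout.inr f (kernel.ι φ) ≫ σ) :=
    hφ.2 _ (by rw [Category.assoc, hσ, pushout.inr_desc])
  obtain ⟨r, hr⟩ : ∃ r : W ⟶ C, f ≫ r = kernel.ι φ :=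
    ⟨pushout.inl f (kernel.ι φ) ≫ σ ≫ inv (pushout.inr f (kernel.ι φ) ≫ σ), by
      rw [pushout.condition_assoc, ← Category.assoc (pushout.inr _ _), IsIso.hom_inv_id,
        Category.comp_id]⟩
  obtain ⟨m, hm⟩ := hS.shortExact.exists_desc (r ≫ φ) (by rw [reassoc_of% hr, kernel.condition])
  obtain ⟨σ', hσ'⟩ := hφ.1.2 C' hC' m
  refine ⟨kernel.lift φ (r - g ≫ σ')
    (by rw [Preadditive.sub_comp, Category.assoc, hσ']; exact sub_eq_zero.2 hm.symm), ?_⟩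
  rw [← cancel_mono (kernel.ι φ), Category.assoc, kernel.lift_ι, Preadditive.comp_sub, hr,
    reassoc_of% w, zero_comp, sub_zero, Category.id_comp]

/-- The dual of Wakamatsu's lemma. -/
lemma IsMinimalLeftApprox.cokernel_mem (hcp : IsRelCotorsionPair 𝒳 𝒞 𝒟)
    (hbp : IsBalancedPair 𝒳 𝒴) (hadm : XAdmissible 𝒳) {C E L : A} {ψ : C ⟶ E}
    (hψ : IsMinimalLeftApprox 𝒟 ψ) {q : E ⟶ L} {w : ψ ≫ q = 0}
    (hS : (ShortComplex.mk ψ q w).ShortExact) (hC : C ∈ 𝒞) : L ∈ 𝒞 := by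
  refine (hcp.mem_left_iff hbp hadm).2 fun D hD W f g w' hT => ?_
  have hP := hT.pullback q
  obtain ⟨ψ', hψ'⟩ :=
    hP.exists_lift_of_properExtensionsSplit (hcp.properExtensionsSplit hbp hadm hC hD) ψ
  obtain ⟨v, hv⟩ := hψ.1.2 _ (hcp.mem_right_of_isProperSES hP hD hψ.1.1) ψ'
  have : IsIso (v ≫ pullback.snd g q) := hψ.2 _ (by rw [← Category.assoc, hv]; exact hψ')
  obtain ⟨l, hl⟩ : ∃ l : E ⟶ W, l ≫ g = q :=
    ⟨inv (v ≫ pullback.snd g q) ≫ v ≫ pullback.fst g q, by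
      rw [Category.assoc, Category.assoc, pullback.condition, ← Category.assoc v,
        IsIso.inv_hom_id_assoc]⟩
  obtain ⟨κ, hκ⟩ := hT.shortExact.exists_lift (ψ ≫ l) (by rw [Category.assoc, hl, w])
  obtain ⟨κ', hκ'⟩ := hψ.1.2 D hD κ
  obtain ⟨σ, hσ⟩ := hS.exists_desc (l - κ' ≫ f)
    (by rw [Preadditive.comp_sub, reassoc_of% hκ']; exact sub_eq_zero.2 hκ.symm)
  have : Epi q := hS.epi_g
  refine hT.shortExact.exists_retraction_of_section (σ := σ) ?_
  rw [← cancel_epi q, reassoc_of% hσ]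
  dsimp only
  rw [Preadditive.sub_comp, hl, Category.assoc, w', comp_zero, sub_zero, Category.comp_id]

lemma IsRightApprox.isProperSES_kernel (hcov : HasEpiCovers 𝒳) (h : 𝒳 ⊆ 𝒞) {C M : A}
    {φ : C ⟶ M} (hφ : IsRightApprox 𝒞 φ) :
    IsProperSES 𝒳 (ShortComplex.mk (kernel.ι φ) φ (kernel.condition φ)) :=
  have := hφ.epi hcov h
  ⟨{ exact := ShortComplex.exact_of_f_is_kernel _ (kernelIsKernel φ) },
    fun X hX => hφ.2 X (h hX)⟩

/-- An endomorphism `s` of the pushout fixing `M` yields `inl ≫ s - inl = q ≫ u`; lifting `u`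
along `inl` (possible as `Ext⁎¹(L, K) = 0`) gives an endomorphism `𝟙 + q ≫ v` of `E` fixing
`C` and inducing `s`, which is invertible by minimality of `ψ`. -/
lemma pushout_inr_left_minimal {C M E L K : A} {φ : C ⟶ M} {ψ : C ⟶ E}
    (hψ : ∀ s : E ⟶ E, ψ ≫ s = ψ → IsIso s) {q : E ⟶ L} {w : ψ ≫ q = 0}
    (hψq : (ShortComplex.mk ψ q w).ShortExact) (i : K ⟶ C)
    {w' : (i ≫ ψ) ≫ pushout.inl ψ φ = 0}
    (hT : IsProperSES 𝒳 (ShortComplex.mk (i ≫ ψ) (pushout.inl ψ φ) w'))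
    (hL : ProperExtensionsSplit 𝒳 L K) (s : pushout ψ φ ⟶ pushout ψ φ)
    (hs : pushout.inr ψ φ ≫ s = pushout.inr ψ φ) : IsIso s := by
  obtain ⟨u, hu⟩ := hψq.exists_desc (pushout.inl ψ φ ≫ s - pushout.inl ψ φ)
    (by
      rw [Preadditive.comp_sub]; dsimp only
      rw [pushout.condition_assoc, hs, pushout.condition, sub_self])
  obtain ⟨v, hv⟩ := hT.exists_lift_of_properExtensionsSplit hL u
  have : IsIso (𝟙 E + q ≫ v) :=
    hψ _ (by rw [Preadditive.comp_add, Category.comp_id, reassoc_of% w, zero_comp, add_zero])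
  refine hT.shortExact.isIso_of_comm (𝟙 E + q ≫ v)
    (by
      dsimp only
      rw [Preadditive.comp_add, Category.comp_id, Category.assoc, reassoc_of% w, zero_comp,
        comp_zero, add_zero]) s ?_
  dsimp only at hu hv ⊢
  rw [Preadditive.add_comp, Category.id_comp, Category.assoc, hv, hu, add_sub_cancel]

theorem isMinimalLeftApprox_pushout_inr (hbp : IsBalancedPair 𝒳 𝒴) (hadm : XAdmissible 𝒳)
    (hcp : IsRelCotorsionPair 𝒳 𝒞 𝒟)
    (hher : ∀ C ∈ 𝒞, ∀ D ∈ 𝒟, ExtStarVanish 𝒳 2 C D) {C M E : A} {φ : C ⟶ M}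
    (hφ : IsMinimalRightApprox 𝒞 φ) {ψ : C ⟶ E} (hψ : IsMinimalLeftApprox 𝒟 ψ) :
    IsMinimalLeftApprox 𝒟 (pushout.inr ψ φ) := by
  have hcov := hbp.hasEpiCovers hadm
  have hS := hφ.1.isProperSES_kernel hcov (hcp.subset_left hbp hadm)
  have hK : kernel φ ∈ 𝒟 := hφ.kernel_mem hcp hbp hadm
  have : Mono ψ := hψ.1.mono hbp hadm (hcp.subset_right hbp hadm)
  have hψq : (ShortComplex.mk ψ (cokernel.π ψ) (cokernel.condition ψ)).ShortExact :=
    { exact := ShortComplex.exact_of_g_is_cokernel _ (cokernelIsCokernel ψ) }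
  have hL : cokernel ψ ∈ 𝒞 := hψ.cokernel_mem hcp hbp hadm hψq hφ.1.1
  have hT := hbp.isProperSES_of_extension hadm (hS.shortExact.pushout_inl ψ) fun Y hY a => by
    obtain ⟨b, hb⟩ := hS.exists_extension_of_properExtensionsSplit
      (hbp.properExtensionsSplit_of_mem hadm hY _) a
    obtain ⟨c, hc⟩ := hψ.1.2 Y (hcp.subset_right hbp hadm hY) b
    exact ⟨c, by dsimp only at hb ⊢; rw [Category.assoc, hc, hb]⟩
  refine ⟨⟨?_, fun Y hY f => ?_⟩, pushout_inr_left_minimal hψ.2 hψq (kernel.ι φ) hT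
    (hcp.properExtensionsSplit hbp hadm hL hK)⟩
  · exact (hcp.2 _).2 fun C₁ hC₁ => hT.extStarVanish_X₃ ((hcp.1 C₁).1 hC₁ E hψ.1.1)
      (hher C₁ hC₁ _ hK)
  · obtain ⟨c, hc⟩ := hψ.1.2 Y hY (φ ≫ f)
    exact ⟨pushout.desc c f hc, pushout.inr_desc _ _ _⟩

end

theorem stmt11 (𝒳 𝒴 𝒞 𝒟 : Set A) (hbp : IsBalancedPair 𝒳 𝒴) (hadm : XAdmissible 𝒳)
    (hcp : IsRelCotorsionPair 𝒳 𝒞 𝒟)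
    (hher : ∀ i : ℕ, 1 ≤ i → ∀ C ∈ 𝒞, ∀ D ∈ 𝒟, ExtStarVanish 𝒳 i C D)
    (h1 : ∀ M : A, ∃ (E : A) (f : E ⟶ M), IsMinimalRightApprox 𝒞 f)
    (h2 : ∀ C ∈ 𝒞, ∃ (Y : A) (g : C ⟶ Y), IsMinimalLeftApprox 𝒟 g) :
    ∀ M : A, (∃ (E : A) (f : E ⟶ M), IsMinimalRightApprox 𝒞 f) ∧
      (∃ (Y : A) (g : M ⟶ Y), IsMinimalLeftApprox 𝒟 g) := by
  intro M
  obtain ⟨C, φ, hφ⟩ := h1 M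
  obtain ⟨E, ψ, hψ⟩ := h2 C hφ.1.1
  exact ⟨⟨C, φ, hφ⟩, _, _,
    isMinimalLeftApprox_pushout_inr hbp hadm hcp (hher 2 (by norm_num)) hφ hψ⟩
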